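/- arXiv:1805.12278 — 2 statements merged into one kernel-verified Lean document; each statement's English description precedes it below -/
import Mathlib

section
/- Let a > 0, b > 0, and q > 0 be real numbers. Then the quantity P* := ( −(a+2)b + √( (a+2)²b² + 4(a+1)(q − b²) ) ) / (2(a+1)) is well defined (the discriminant (a+2)²b² + 4(a+1)(q − b²) is nonnegative), satisfies (a+1)P* + b > 0 and P* + b > 0, and is the unique real number P with (a+1)P + b > 0 and P + b > 0 such that (a+1)/((a+1)P + b) − 1/(P + b) = a·b/q. -/
/-!
Clearing denominators, `(a+1)/((a+1)P+b) - 1/(P+b) = ab / (((a+1)P+b)(P+b))`, so the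
stationarity condition says exactly that `P` is a root of `(a+1)P² + (a+2)bP + (b² - q)`,
whose discriminant is `(ab)² + 4(a+1)q > 0`. With `s` its square root, the two roots give
`(a+1)P + b = (±s - ab)/2`, and `s > ab`: the `+` root is admissible and the `-` root is not.
-/

section RelayPower

variable {a b q P : ℝ}

lemma add_one_div_sub_one_div (h₁ : (a + 1) * P + b ≠ 0) (h₂ : P + b ≠ 0) :
    (a + 1) / ((a + 1) * P + b) - 1 / (P + b) = a * b / (((a + 1) * P + b) * (P + b)) := by
  rw [div_sub_div _ _ h₁ h₂]
  ring

lemma add_one_div_sub_one_div_eq_iff (hab : a * b ≠ 0) (hq : q ≠ 0)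
    (h₁ : (a + 1) * P + b ≠ 0) (h₂ : P + b ≠ 0) :
    (a + 1) / ((a + 1) * P + b) - 1 / (P + b) = a * b / q ↔
      (a + 1) * (P * P) + (a + 2) * b * P + (b ^ 2 - q) = 0 := by
  have hquad : (a + 1) * (P * P) + (a + 2) * b * P + (b ^ 2 - q)
      = ((a + 1) * P + b) * (P + b) - q := by ring
  rw [add_one_div_sub_one_div h₁ h₂, div_eq_div_iff (mul_ne_zero h₁ h₂) hq, mul_right_inj' hab,
    hquad, sub_eq_zero, eq_comm]

variable (s : ℝ)

lemma add_one_mul_root_add (ha : a + 1 ≠ 0) :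
    (a + 1) * ((-((a + 2) * b) + s) / (2 * (a + 1))) + b = (s - a * b) / 2 := by
  field_simp
  ring

lemma add_one_mul_root_sub (ha : a + 1 ≠ 0) :
    (a + 1) * ((-((a + 2) * b) - s) / (2 * (a + 1))) + b = -(a * b + s) / 2 := by
  field_simp
  ring

lemma root_add_add (ha : a + 1 ≠ 0) :
    (-((a + 2) * b) + s) / (2 * (a + 1)) + b = (a * b + s) / (2 * (a + 1)) := by
  field_simp
  ring

end RelayPower

/-- For `a, b, q > 0`, the quantity
`P* = (−(a+2)b + √((a+2)²b² + 4(a+1)(q − b²)))/(2(a+1))` is well defined (nonnegative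
discriminant), satisfies `(a+1)P* + b > 0` and `P* + b > 0`, and is the unique real `P`
with `(a+1)P + b > 0` and `P + b > 0` solving `(a+1)/((a+1)P + b) − 1/(P + b) = ab/q`. -/
theorem optimal_relay_power_closed_form (a b q : ℝ) (ha : 0 < a) (hb : 0 < b) (hq : 0 < q) :
    0 ≤ (a + 2) ^ 2 * b ^ 2 + 4 * (a + 1) * (q - b ^ 2) ∧
    (let Pstar : ℝ :=
        (-(a + 2) * b + Real.sqrt ((a + 2) ^ 2 * b ^ 2 + 4 * (a + 1) * (q - b ^ 2)))
          / (2 * (a + 1));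
      0 < (a + 1) * Pstar + b ∧ 0 < Pstar + b ∧
      (a + 1) / ((a + 1) * Pstar + b) - 1 / (Pstar + b) = a * b / q ∧
      ∀ P : ℝ, 0 < (a + 1) * P + b → 0 < P + b →
        (a + 1) / ((a + 1) * P + b) - 1 / (P + b) = a * b / q → P = Pstar) := by
  have ha₁ : a + 1 ≠ 0 := by positivity
  have hab : 0 < a * b := mul_pos ha hb
  have hΔ : (a + 2) ^ 2 * b ^ 2 + 4 * (a + 1) * (q - b ^ 2) = (a * b) ^ 2 + 4 * (a + 1) * q := by
    ring
  have hΔ_pos : 0 < (a + 2) ^ 2 * b ^ 2 + 4 * (a + 1) * (q - b ^ 2) := by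
    rw [hΔ]
    positivity
  refine ⟨hΔ_pos.le, ?_⟩
  intro Pstar
  set s := Real.sqrt ((a + 2) ^ 2 * b ^ 2 + 4 * (a + 1) * (q - b ^ 2)) with hs
  have hdiscrim : discrim (a + 1) ((a + 2) * b) (b ^ 2 - q) = s * s := by
    rw [hs, Real.mul_self_sqrt hΔ_pos.le, discrim]
    ring
  have hab_lt_s : a * b < s := by
    rw [hs, Real.lt_sqrt hab.le, hΔ]
    nlinarith
  have hPstar : Pstar = (-((a + 2) * b) + s) / (2 * (a + 1)) := by
    simp only [Pstar, s, neg_mul]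
  have hd₁ : 0 < (a + 1) * Pstar + b := by
    rw [hPstar, add_one_mul_root_add s ha₁]
    linarith
  have hd₂ : 0 < Pstar + b := by
    rw [hPstar, root_add_add s ha₁]
    positivity
  have hroots (P : ℝ) (h₁ : 0 < (a + 1) * P + b) (h₂ : 0 < P + b) :=
    (add_one_div_sub_one_div_eq_iff hab.ne' hq.ne' h₁.ne' h₂.ne').trans
      (quadratic_eq_zero_iff ha₁ hdiscrim P)
  refine ⟨hd₁, hd₂, (hroots _ hd₁ hd₂).2 (Or.inl hPstar), fun P h₁ h₂ hP => ?_⟩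
  obtain rfl | rfl := (hroots P h₁ h₂).1 hP
  · exact hPstar.symm
  · rw [add_one_mul_root_sub s ha₁] at h₁
    linarith
end

section
/- Let X be a nonempty compact topological space and let f, g : X → ℝ be continuous functions with g(x) > 0 for all x ∈ X. Define F(ξ) = max_{x ∈ X} ( f(x) − ξ·g(x) ) and ξ* = max_{x ∈ X} f(x)/g(x) (both maxima are attained by compactness). Then F(ξ*) = 0, and ξ* is the unique real number ξ with F(ξ) = 0; moreover a point x* ∈ X attains the maximum of f/g if and only if f(x*) − ξ*·g(x*) = 0. -/
/-! Dividing by `g x > 0`, the value `ξ` bounds (resp. equals) `f x / g x` exactly when `0` bounds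
(resp. equals) `f x - ξ * g x`. Hence `ξ` is the maximum of `f / g` if and only if `0` is the
maximum of `f - ξ g`. On a nonempty compact space both maxima are attained, so they are the
suprema `⨆`, and uniqueness of greatest elements gives all three claims. -/

open Set

theorem div_le_iff_sub_mul_nonpos {K : Type*} [Field K] [LinearOrder K] [IsStrictOrderedRing K]
    {a b c : K} (hb : 0 < b) : a / b ≤ c ↔ a - c * b ≤ 0 := by
  rw [div_le_iff₀ hb, sub_nonpos]

theorem div_eq_iff_sub_mul_eq_zero {K : Type*} [DivisionRing K] {a b c : K} (hb : b ≠ 0) :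
    a / b = c ↔ a - c * b = 0 := by
  rw [div_eq_iff hb, sub_eq_zero]

theorem isGreatest_range_div_iff {X K : Type*} [Field K] [LinearOrder K] [IsStrictOrderedRing K]
    {f g : X → K} (hg : ∀ x, 0 < g x) {ξ : K} :
    IsGreatest (range fun x => f x / g x) ξ ↔ IsGreatest (range fun x => f x - ξ * g x) 0 := by
  simp only [IsGreatest, mem_upperBounds, forall_mem_range]
  simp only [mem_range, div_le_iff_sub_mul_nonpos (hg _), div_eq_iff_sub_mul_eq_zero (hg _).ne']

theorem Continuous.isGreatest_range_iSup {X α : Type*} [TopologicalSpace X] [CompactSpace X]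
    [Nonempty X] [ConditionallyCompleteLinearOrder α] [TopologicalSpace α] [ClosedIciTopology α]
    {h : X → α} (hh : Continuous h) : IsGreatest (range h) (⨆ x, h x) :=
  (isCompact_range hh).isGreatest_sSup (range_nonempty h)

/-- For a nonempty compact space `X`, continuous `f, g : X → ℝ` with
`g > 0`, letting `F(ξ) = max_x (f(x) − ξ·g(x))` and `ξ* = max_x f(x)/g(x)`, one has
`F(ξ*) = 0`, `ξ*` is the unique zero of `F`, and `x*` maximizes `f/g` iff
`f(x*) − ξ*·g(x*) = 0`. -/
theorem dinkelbach_root_characterization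
    {X : Type*} [TopologicalSpace X] [CompactSpace X] [Nonempty X]
    (f g : X → ℝ) (hf : Continuous f) (hg : Continuous g) (hgpos : ∀ x, 0 < g x) :
    (⨆ x : X, (f x - (⨆ y : X, f y / g y) * g x)) = 0 ∧
    (∀ ξ : ℝ, (⨆ x : X, (f x - ξ * g x)) = 0 → ξ = ⨆ y : X, f y / g y) ∧
    (∀ x : X, f x / g x = (⨆ y : X, f y / g y) ↔
      f x - (⨆ y : X, f y / g y) * g x = 0) := by
  have hF (ξ : ℝ) : IsGreatest (range fun x => f x - ξ * g x) (⨆ x, f x - ξ * g x) :=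
    (hf.sub (continuous_const.mul hg)).isGreatest_range_iSup
  have hratio : IsGreatest (range fun x => f x / g x) (⨆ y, f y / g y) :=
    (hf.div hg fun x => (hgpos x).ne').isGreatest_range_iSup
  refine ⟨?_, fun ξ hξ => ?_, fun x => div_eq_iff_sub_mul_eq_zero (hgpos x).ne'⟩
  · exact (hF _).unique ((isGreatest_range_div_iff hgpos).1 hratio)
  · exact ((isGreatest_range_div_iff hgpos).2 (hξ ▸ hF ξ)).unique hratio
end
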